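/- arXiv:1405.1870 — 5 statements merged into one kernel-verified Lean document; each statement's English description precedes it below -/
import Mathlib

section
/- For all positive integers p, q with p < q, the series ∑_{n=0}^∞ (1/(n+1) − q/(p+nq)) converges and equals −(π/2)·cot(πp/q) − ln q + ∑_{n=1}^{q−1} ln(2·sin(πn/q))·cos(2πnp/q). -/
/-!
With `ζ = exp (2πi/q)`, the roots-of-unity filter gives
`q * ∑_{n<N} 1/(p+nq) = ∑_{j<q} ζ^(-jp) * ∑_{k<Nq} ζ^(j(k+1))/(k+1)`.
The term `j = 0` is the harmonic number `H_{Nq}`, and `H_N - H_{Nq} → -log q`. For `0 < j < q`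
the inner sums converge on the unit circle (Dirichlet's test, then Abel's limit theorem) to
`-log (1 - ζ^j) = -log (2 sin (πj/q)) - i (πj/q - π/2)`. Taking real parts, the logarithms give
the cosine sum and the linear terms add up to `-(π/2) cot (πp/q)` by `∑_{j<q} j z^j = q/(z-1)`.
The terms of the series are all `≤ 0`, so convergence of the partial sums is already `HasSum`.
-/

open Real Finset Filter Topology

namespace Complex

lemma re_lt_one_of_norm_le_one {z : ℂ} (hz : ‖z‖ ≤ 1) (h1 : z ≠ 1) : z.re < 1 := by
  by_contra! hre
  have hsq : z.re * z.re + z.im * z.im ≤ 1 := by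
    rw [← normSq_apply, normSq_eq_norm_sq]
    exact pow_le_one₀ (norm_nonneg z) hz
  exact h1 (ext (by simp only [one_re]; nlinarith) (by simp only [one_im]; nlinarith))

lemma cauchySeq_sum_pow_succ_div {z : ℂ} (hz : ‖z‖ ≤ 1) (h1 : z ≠ 1) :
    CauchySeq fun n ↦ ∑ k ∈ range n, z ^ (k + 1) / (k + 1) := by
  have hbound (n : ℕ) : ‖∑ k ∈ range n, z ^ (k + 1)‖ ≤ 2 / ‖z - 1‖ := by
    have hgeom : ∑ k ∈ range n, z ^ (k + 1) = z * ((z ^ n - 1) / (z - 1)) := by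
      simp only [← geom_sum_eq h1, mul_sum, pow_succ']
    rw [hgeom, norm_mul, norm_div]
    have hnum : ‖z ^ n - 1‖ ≤ 2 := by
      calc ‖z ^ n - 1‖ ≤ ‖z‖ ^ n + ‖(1 : ℂ)‖ := by rw [← norm_pow]; exact norm_sub_le _ _
        _ ≤ 2 := by linarith [pow_le_one₀ (n := n) (norm_nonneg z) hz, norm_one (α := ℂ)]
    calc ‖z‖ * (‖z ^ n - 1‖ / ‖z - 1‖) ≤ 1 * (2 / ‖z - 1‖) := by gcongr
      _ = 2 / ‖z - 1‖ := one_mul _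
  have hanti : Antitone fun k : ℕ ↦ 1 / ((k : ℝ) + 1) := fun a b hab ↦ Nat.one_div_le_one_div hab
  convert hanti.cauchySeq_series_mul_of_tendsto_zero_of_bounded
    tendsto_one_div_add_atTop_nhds_zero_nat hbound using 3 with n k
  rw [real_smul]
  push_cast
  ring

-- Dirichlet's test gives convergence; Abel's limit theorem identifies the limit.
lemma tendsto_sum_pow_succ_div {z : ℂ} (hz : ‖z‖ ≤ 1) (h1 : z ≠ 1) :
    Tendsto (fun n ↦ ∑ k ∈ range n, z ^ (k + 1) / (k + 1)) atTop (𝓝 (-log (1 - z))) := by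
  obtain ⟨l, hl⟩ := cauchySeq_tendsto_of_complete (cauchySeq_sum_pow_succ_div hz h1)
  suffices l = -log (1 - z) from this ▸ hl
  have hl' : Tendsto (fun n ↦ ∑ k ∈ range n, z ^ k / k) atTop (𝓝 l) := by
    rw [← tendsto_add_atTop_iff_nat 1]
    simpa [sum_range_succ'] using hl
  have habel := tendsto_map'_iff.mp (tendsto_tsum_powerSeries_nhdsWithin_lt hl')
  have hseries : (fun x : ℝ ↦ ∑' n : ℕ, z ^ n / n * (x : ℂ) ^ n) =ᶠ[𝓝[<] 1]
      fun x ↦ -log (1 - z * x) := by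
    filter_upwards [Ioo_mem_nhdsLT (show (-1 : ℝ) < 1 by norm_num)] with x hx
    have hzx : ‖z * x‖ < 1 := by
      rw [norm_mul, norm_real, Real.norm_eq_abs]
      calc ‖z‖ * |x| ≤ 1 * |x| := by gcongr
        _ < 1 := by rw [one_mul, abs_lt]; exact hx
    simp only [← (hasSum_taylorSeries_neg_log hzx).tsum_eq, mul_pow, mul_div_right_comm]
  have hcont : ContinuousAt (fun x : ℝ ↦ -log (1 - z * x)) 1 := by
    refine (ContinuousAt.clog (by fun_prop) ?_).neg
    left
    simpa using re_lt_one_of_norm_le_one hz h1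
  have hlim := hcont.tendsto.mono_left (nhdsWithin_le_nhds (s := Set.Iio 1))
  simp only [ofReal_one, mul_one] at hlim
  exact tendsto_nhds_unique (habel.congr' hseries) hlim

lemma log_one_sub_exp_two_mul_I {x : ℝ} (h0 : 0 < x) (hπ : x < π) :
    log (1 - exp (2 * x * I)) = Real.log (2 * Real.sin x) + ((x - π / 2 : ℝ) : ℂ) * I := by
  have hsin : 0 < Real.sin x := Real.sin_pos_of_pos_of_lt_pi h0 hπ
  have hpolar :
      1 - exp (2 * x * I) = exp (Real.log (2 * Real.sin x) + ((x - π / 2 : ℝ) : ℂ) * I) := by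
    rw [exp_add, ← ofReal_exp, Real.exp_log (by positivity), exp_mul_I, exp_mul_I]
    push_cast
    rw [cos_sub_pi_div_two, sin_sub_pi_div_two, cos_two_mul, sin_two_mul]
    linear_combination (-2 : ℂ) * sin_sq_add_cos_sq (x : ℂ)
  rw [hpolar, log_exp] <;> simp <;> linarith [Real.pi_pos]

lemma inv_exp_mul_I_sub_one_im (θ : ℝ) :
    ((exp (θ * I) - 1)⁻¹).im = -Real.cot (θ / 2) / 2 := by
  obtain ⟨x, rfl⟩ : ∃ x, θ = 2 * x := ⟨θ / 2, by ring⟩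
  rw [inv_im, normSq_apply]
  simp only [sub_re, sub_im, one_re, one_im, sub_zero, exp_ofReal_mul_I_re,
    exp_ofReal_mul_I_im, Real.cos_two_mul, Real.sin_two_mul, Real.cot_eq_cos_div_sin,
    mul_div_cancel_left₀ x two_ne_zero]
  have hden : (2 * Real.cos x ^ 2 - 1 - 1) * (2 * Real.cos x ^ 2 - 1 - 1) +
      2 * Real.sin x * Real.cos x * (2 * Real.sin x * Real.cos x) = 4 * Real.sin x ^ 2 := by
    linear_combination (4 * Real.cos x ^ 2 - 4) * Real.sin_sq_add_cos_sq x
  rw [hden]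
  rcases eq_or_ne (Real.sin x) 0 with hs | hs
  · simp [hs]
  · field_simp
    ring

end Complex

lemma Finset.sum_range_eq_add_sum_Icc {M : Type*} [AddCommMonoid M] (f : ℕ → M) {q : ℕ}
    (hq : 0 < q) : ∑ j ∈ range q, f j = f 0 + ∑ j ∈ Icc 1 (q - 1), f j := by
  rw [range_eq_Ico, sum_eq_sum_Ico_succ_bot hq]
  congr 2

lemma sum_range_natCast_mul_pow_of_pow_eq_one {K : Type*} [Field K] {z : K} {q : ℕ}
    (hz1 : z ≠ 1) (hzq : z ^ q = 1) : ∑ j ∈ range q, (j : K) * z ^ j = q / (z - 1) := by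
  have htelescope (n : ℕ) :
      (z - 1) * ∑ j ∈ range n, (j : K) * z ^ j = n * z ^ n - z * ∑ j ∈ range n, z ^ j := by
    induction n with
    | zero => simp
    | succ n ih =>
      rw [sum_range_succ, sum_range_succ, mul_add, ih]
      push_cast
      ring
  have hgeom : ∑ j ∈ range q, z ^ j = 0 := by rw [geom_sum_eq hz1, hzq, sub_self, zero_div]
  rw [eq_div_iff (sub_ne_zero.mpr hz1), mul_comm, htelescope, hgeom, hzq]
  ring

lemma harmonic_eq_sum_range_one_div (n : ℕ) :
    (harmonic n : ℝ) = ∑ k ∈ range n, 1 / ((k : ℝ) + 1) := by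
  simp [harmonic]

lemma tendsto_harmonic_sub_harmonic_mul {q : ℕ} (hq : 0 < q) :
    Tendsto (fun N : ℕ ↦ (harmonic N : ℝ) - harmonic (N * q)) atTop (𝓝 (-Real.log q)) := by
  have hmul : Tendsto (fun N ↦ N * q) atTop atTop := tendsto_id.atTop_mul_const' hq
  have h := (tendsto_harmonic_sub_log.sub (tendsto_harmonic_sub_log.comp hmul)).add_const
    (-Real.log q)
  rw [sub_self, zero_add] at h
  refine h.congr' ?_
  filter_upwards [eventually_ne_atTop 0] with N hN
  simp only [Function.comp_apply, Nat.cast_mul]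
  rw [Real.log_mul (by positivity) (by positivity)]
  ring

lemma hasSum_of_nonpos_of_tendsto {f : ℕ → ℝ} {a : ℝ} (hf : ∀ n, f n ≤ 0)
    (h : Tendsto (fun N ↦ ∑ n ∈ range N, f n) atTop (𝓝 a)) : HasSum f a := by
  have hneg := (hasSum_iff_tendsto_nat_of_nonneg (fun n ↦ neg_nonneg.mpr (hf n)) (-a)).mpr
    (by simpa using h.neg)
  simpa using hneg.neg

noncomputable def expFrac (q : ℕ) (m : ℤ) : ℂ := Complex.exp ((2 * π * m / q : ℝ) * Complex.I)

lemma expFrac_add (q : ℕ) (a b : ℤ) : expFrac q (a + b) = expFrac q a * expFrac q b := by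
  rw [expFrac, expFrac, expFrac, ← Complex.exp_add]
  push_cast
  ring_nf

lemma expFrac_pow (q : ℕ) (m : ℤ) (n : ℕ) : expFrac q m ^ n = expFrac q (m * n) := by
  rw [expFrac, expFrac, ← Complex.exp_nat_mul]
  push_cast
  ring_nf

lemma norm_expFrac (q : ℕ) (m : ℤ) : ‖expFrac q m‖ = 1 :=
  Complex.norm_exp_ofReal_mul_I _

lemma expFrac_eq_one_iff {q : ℕ} (hq : 0 < q) (m : ℤ) : expFrac q m = 1 ↔ (q : ℤ) ∣ m := by
  have hzpow : expFrac q m = Complex.exp (2 * π * Complex.I / q) ^ m := by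
    rw [expFrac, ← Complex.exp_int_mul]
    push_cast
    ring_nf
  rw [hzpow, (Complex.isPrimitiveRoot_exp q hq.ne').zpow_eq_one_iff_dvd]

lemma expFrac_natCast_ne_one {q j : ℕ} (hj0 : 0 < j) (hjq : j < q) : expFrac q j ≠ 1 := by
  rw [Ne, expFrac_eq_one_iff (hj0.trans hjq), Int.natCast_dvd_natCast]
  exact Nat.not_dvd_of_pos_of_lt hj0 hjq

lemma sum_range_expFrac_pow {q : ℕ} (hq : 0 < q) (m : ℤ) :
    ∑ j ∈ range q, expFrac q m ^ j = if (q : ℤ) ∣ m then (q : ℂ) else 0 := by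
  split_ifs with hdvd
  · simp [(expFrac_eq_one_iff hq m).mpr hdvd]
  · have hpow : expFrac q m ^ q = 1 := by
      rw [expFrac_pow, expFrac_eq_one_iff hq]
      exact dvd_mul_left _ _
    rw [geom_sum_eq (mt (expFrac_eq_one_iff hq m).mp hdvd), hpow, sub_self, zero_div]

-- Roots-of-unity filter on one block `nq ≤ k < (n+1)q`: only `k + 1 = p + nq` survives.
lemma sum_expFrac_mul_sum_range_pow_div {p q : ℕ} (hp : 0 < p) (hpq : p ≤ q) (n : ℕ) :
    ∑ j ∈ range q, expFrac q (-(j * p)) *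
        ∑ r ∈ range q, expFrac q j ^ (n * q + r + 1) / (((n * q + r : ℕ) : ℂ) + 1) =
      q / (p + n * q) := by
  have hq : 0 < q := hp.trans_le hpq
  have hdvd_iff (r : ℕ) (hr : r < q) : (q : ℤ) ∣ ((n * q + r : ℕ) : ℤ) + 1 - p ↔ r = p - 1 := by
    have hsplit : ((n * q + r : ℕ) : ℤ) + 1 - p = n * q + ((r : ℤ) + 1 - p) := by push_cast; ring
    rw [hsplit, Int.dvd_add_right (dvd_mul_left (q : ℤ) n)]
    constructor
    · intro h
      have := Int.eq_zero_of_abs_lt_dvd h (by rw [abs_lt]; omega)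
      omega
    · intro h
      rw [show (r : ℤ) + 1 - p = 0 by omega]
      exact dvd_zero _
  have hterm (j r : ℕ) : expFrac q (-(j * p)) * (expFrac q j ^ (n * q + r + 1) /
      (((n * q + r : ℕ) : ℂ) + 1)) =
      expFrac q (((n * q + r : ℕ) : ℤ) + 1 - p) ^ j / (((n * q + r : ℕ) : ℂ) + 1) := by
    rw [expFrac_pow, expFrac_pow, ← mul_div_assoc, ← expFrac_add]
    congr 2
    push_cast
    ring
  simp_rw [mul_sum, hterm]
  rw [sum_comm]
  simp_rw [← sum_div, sum_range_expFrac_pow hq, ite_div, zero_div]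
  rw [sum_congr rfl fun r hr ↦ if_congr (hdvd_iff r (mem_range.mp hr)) rfl rfl,
    sum_ite_eq' _ _ _, if_pos (mem_range.mpr (by omega))]
  congr 1
  push_cast [Nat.cast_sub hp]
  ring

lemma natCast_mul_sum_one_div_eq {p q : ℕ} (hp : 0 < p) (hpq : p ≤ q) (N : ℕ) :
    (q : ℂ) * ∑ n ∈ range N, 1 / ((p : ℂ) + n * q) =
      ∑ j ∈ range q, expFrac q (-(j * p)) *
        ∑ k ∈ range (N * q), expFrac q j ^ (k + 1) / ((k : ℂ) + 1) := by
  induction N with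
  | zero => simp
  | succ N ih =>
    simp_rw [sum_range_succ, mul_add, ih, Nat.succ_mul, sum_range_add, mul_add, sum_add_distrib,
      sum_expFrac_mul_sum_range_pow_div hp hpq N, mul_one_div]

lemma sum_range_one_div_sub_div_eq {p q : ℕ} (hp : 0 < p) (hpq : p ≤ q) (N : ℕ) :
    ∑ n ∈ range N, (1 / ((n : ℝ) + 1) - q / (p + n * q)) =
      harmonic N - harmonic (N * q) -
        (∑ j ∈ Icc 1 (q - 1), expFrac q (-(j * p)) *
          ∑ k ∈ range (N * q), expFrac q j ^ (k + 1) / ((k : ℂ) + 1)).re := by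
  have hkey := natCast_mul_sum_one_div_eq hp hpq N
  have hzero : expFrac q 0 = 1 := by simp [expFrac]
  rw [sum_range_eq_add_sum_Icc _ (hp.trans_le hpq)] at hkey
  simp only [CharP.cast_eq_zero, zero_mul, neg_zero, hzero, one_pow, one_mul] at hkey
  have hcast : (q : ℂ) * ∑ n ∈ range N, 1 / ((p : ℂ) + n * q) =
      ((q * ∑ n ∈ range N, 1 / ((p : ℝ) + n * q) : ℝ) : ℂ) := by
    push_cast
    rfl
  have hharmonic : ∑ k ∈ range (N * q), 1 / ((k : ℂ) + 1) = ((harmonic (N * q) : ℝ) : ℂ) := by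
    rw [harmonic_eq_sum_range_one_div]
    push_cast
    rfl
  have hre := congrArg Complex.re hkey
  rw [hcast, hharmonic, Complex.add_re, Complex.ofReal_re, Complex.ofReal_re, mul_sum] at hre
  rw [sum_sub_distrib, harmonic_eq_sum_range_one_div]
  simp only [mul_one_div] at hre
  linarith

lemma re_expFrac_mul_log_one_sub_expFrac (p : ℕ) {q j : ℕ} (hj0 : 0 < j) (hjq : j < q) :
    (expFrac q (-(j * p)) * Complex.log (1 - expFrac q j)).re =
      Real.log (2 * Real.sin (π * j / q)) * Real.cos (2 * π * j * p / q) +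
        (π * j / q - π / 2) * Real.sin (2 * π * j * p / q) := by
  have hq : (0 : ℝ) < q := by exact_mod_cast hj0.trans hjq
  have hx : π * j / q < π := by
    rw [div_lt_iff₀ hq]
    exact mul_lt_mul_of_pos_left (by exact_mod_cast hjq) pi_pos
  have hexp : expFrac q j = Complex.exp (2 * (π * j / q : ℝ) * Complex.I) := by
    rw [expFrac]
    push_cast
    ring_nf
  have hangle : 2 * π * ((-(j * p) : ℤ) : ℝ) / q = -(2 * π * j * p / q) := by
    push_cast
    ring
  rw [hexp, Complex.log_one_sub_exp_two_mul_I (by positivity) hx, expFrac, hangle]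
  simp only [Complex.mul_re, Complex.add_re, Complex.add_im, Complex.exp_ofReal_mul_I_re,
    Complex.exp_ofReal_mul_I_im, Complex.ofReal_re, Complex.ofReal_im, Complex.mul_im,
    Complex.I_re, Complex.I_im, Real.cos_neg, Real.sin_neg]
  ring

lemma sum_range_mul_sin_eq_cot {p q : ℕ} (hp : 0 < p) (hpq : p < q) :
    ∑ j ∈ range q, (π * j / q - π / 2) * Real.sin (2 * π * j * p / q) =
      -(π / 2) * Real.cot (π * p / q) := by
  have hq : 0 < q := hp.trans hpq
  set z := expFrac q p with hz
  have hz1 : z ≠ 1 := expFrac_natCast_ne_one hp hpq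
  have hzq : z ^ q = 1 := by
    rw [expFrac_pow, expFrac_eq_one_iff hq]
    exact dvd_mul_left _ _
  have hsum : ∑ j ∈ range q, ((π * j / q - π / 2 : ℝ) : ℂ) * z ^ j = π / (z - 1) := by
    have hgeom : ∑ j ∈ range q, z ^ j = 0 := by rw [geom_sum_eq hz1, hzq, sub_self, zero_div]
    have hsplit (j : ℕ) : ((π * j / q - π / 2 : ℝ) : ℂ) * z ^ j =
        (π / q) * (j * z ^ j) - (π / 2) * z ^ j := by
      push_cast
      ring
    rw [sum_congr rfl fun j _ ↦ hsplit j, sum_sub_distrib, ← mul_sum, ← mul_sum,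
      sum_range_natCast_mul_pow_of_pow_eq_one hz1 hzq, hgeom, mul_zero, sub_zero]
    field_simp [show (q : ℂ) ≠ 0 by exact_mod_cast hq.ne']
  have him (j : ℕ) : (z ^ j).im = Real.sin (2 * π * j * p / q) := by
    rw [hz, expFrac_pow, expFrac, Complex.exp_ofReal_mul_I_im]
    push_cast
    ring_nf
  have hcot : (π / (z - 1)).im = -(π / 2) * Real.cot (π * p / q) := by
    rw [div_eq_mul_inv, Complex.im_ofReal_mul, hz, expFrac, Complex.inv_exp_mul_I_sub_one_im]
    push_cast
    ring_nf
  rw [← hcot, ← hsum, Complex.im_sum]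
  simp_rw [Complex.im_ofReal_mul, him]

lemma re_sum_expFrac_mul_log_one_sub_expFrac {p q : ℕ} (hp : 0 < p) (hpq : p < q) :
    (∑ j ∈ Icc 1 (q - 1), expFrac q (-(j * p)) * Complex.log (1 - expFrac q j)).re =
      -(π / 2) * Real.cot (π * p / q) +
        ∑ j ∈ Icc 1 (q - 1),
          Real.log (2 * Real.sin (π * j / q)) * Real.cos (2 * π * j * p / q) := by
  have hterm (j : ℕ) (hj : j ∈ Icc 1 (q - 1)) :=
    re_expFrac_mul_log_one_sub_expFrac p (q := q) (mem_Icc.mp hj).1 (by grind)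
  rw [Complex.re_sum, sum_congr rfl hterm, sum_add_distrib, add_comm,
    ← sum_range_mul_sin_eq_cot hp hpq, sum_range_eq_add_sum_Icc _ (hp.trans hpq)]
  simp

lemma one_div_add_one_sub_div_nonpos {p q : ℕ} (hp : 0 < p) (hpq : p ≤ q) (n : ℕ) :
    1 / ((n : ℝ) + 1) - q / (p + n * q) ≤ 0 := by
  have hq : (0 : ℝ) < q := by exact_mod_cast hp.trans_le hpq
  rw [sub_nonpos, div_le_div_iff₀ (by positivity) (by positivity)]
  have : (p : ℝ) ≤ q := by exact_mod_cast hpq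
  nlinarith

theorem gauss_digamma_series (p q : ℕ) (hp : 0 < p) (hpq : p < q) :
    HasSum (fun n : ℕ => 1 / ((n : ℝ) + 1) - (q : ℝ) / ((p : ℝ) + (n : ℝ) * q))
      (-(π / 2) * Real.cot (π * p / q) - Real.log q +
        ∑ n ∈ Finset.Icc 1 (q - 1),
          Real.log (2 * Real.sin (π * n / q)) * Real.cos (2 * π * n * p / q)) := by
  have hq : 0 < q := hp.trans hpq
  have hlog (j : ℕ) (hj : j ∈ Icc 1 (q - 1)) :
      Tendsto (fun N ↦ ∑ k ∈ range (N * q), expFrac q j ^ (k + 1) / ((k : ℂ) + 1)) atTop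
        (𝓝 (-Complex.log (1 - expFrac q j))) :=
    (Complex.tendsto_sum_pow_succ_div (norm_expFrac q j).le
      (expFrac_natCast_ne_one (by grind) (by grind))).comp (tendsto_id.atTop_mul_const' hq)
  have hlim := (tendsto_harmonic_sub_harmonic_mul hq).sub ((Complex.continuous_re.tendsto _).comp
    (tendsto_finsetSum _ fun j hj ↦ (hlog j hj).const_mul (expFrac q (-(j * p)))))
  refine hasSum_of_nonpos_of_tendsto (one_div_add_one_sub_div_nonpos hp hpq.le) ?_
  convert hlim using 1
  · ext N
    exact sum_range_one_div_sub_div_eq hp hpq.le N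
  · congr 1
    simp only [mul_neg, sum_neg_distrib, Complex.neg_re,
      re_sum_expFrac_mul_log_one_sub_expFrac hp hpq]
    ring
end

section
/- For every integer w ≥ 2, the series ∑_{n=1}^∞ 1/((n − 1/w)(n + 1/w)) converges and equals w·(w/2 − (π/2)·cot(π/w)). -/
/-!
Specialize the Mittag-Leffler expansion `π cot (π x) = 1/x + ∑ₙ (1/(x - n) + 1/(x + n))` to
`x = 1/w`, using the partial fractions `1/(x - n) + 1/(x + n) = -2x / ((n - x)(n + x))`.
-/

open Real

theorem Real.hasSum_cot_series {x : ℝ} (hx : ∀ n : ℤ, x ≠ n) :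
    HasSum (fun n : ℕ => 1 / (x - (n + 1)) + 1 / (x + (n + 1))) (π * cot (π * x) - 1 / x) := by
  have hxC : (x : ℂ) ∈ Complex.integerComplement :=
    fun ⟨n, hn⟩ => hx n (by exact_mod_cast hn.symm)
  rw [← Complex.hasSum_ofReal]
  push_cast
  exact (summable_cotTerm hxC).hasSum_iff_tendsto_nat.mpr (tendsto_logDeriv_euler_cot_sub hxC)

theorem Real.hasSum_one_div_succ_sub_mul_succ_add {x : ℝ} (hx : ∀ n : ℤ, x ≠ n) :
    HasSum (fun n : ℕ => 1 / ((n + 1 - x) * (n + 1 + x)))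
      ((1 / x - π * cot (π * x)) / (2 * x)) := by
  have hx0 : x ≠ 0 := by exact_mod_cast hx 0
  have hterm (n : ℕ) :
      (1 / (x - (n + 1)) + 1 / (x + (n + 1))) / -(2 * x) = 1 / ((n + 1 - x) * (n + 1 + x)) := by
    have hsub : x - (n + 1) ≠ 0 := fun h => hx (n + 1) (by push_cast; linarith)
    have hadd : x + (n + 1) ≠ 0 := fun h => hx (-(n + 1)) (by push_cast; linarith)
    have hsub' : (n : ℝ) + 1 - x ≠ 0 := fun h => hsub (by linarith)
    have hadd' : (n : ℝ) + 1 + x ≠ 0 := fun h => hadd (by linarith)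
    field_simp
    ring
  have hsum : (π * cot (π * x) - 1 / x) / -(2 * x) = (1 / x - π * cot (π * x)) / (2 * x) := by
    rw [div_neg, ← neg_div, neg_sub]
  simpa only [hterm, hsum] using (Real.hasSum_cot_series hx).div_const (-(2 * x))

theorem Real.one_div_ne_intCast {y : ℝ} (hy : 1 < y) (n : ℤ) : 1 / y ≠ n := by
  intro hn
  have hpos : (0 : ℝ) < n := hn ▸ by positivity
  have hlt : (n : ℝ) < 1 := hn ▸ (div_lt_one (by linarith)).mpr hy
  have : (0 : ℤ) < n ∧ n < 1 := ⟨by exact_mod_cast hpos, by exact_mod_cast hlt⟩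
  omega

theorem zeta2_closed_form (w : ℤ) (hw : 2 ≤ w) :
    HasSum (fun n : ℕ => 1 / ((((n : ℝ) + 1) - 1 / w) * (((n : ℝ) + 1) + 1 / w)))
      ((w : ℝ) * ((w : ℝ) / 2 - (π / 2) * Real.cot (π / w))) := by
  have hw1 : (1 : ℝ) < w := by exact_mod_cast hw
  convert Real.hasSum_one_div_succ_sub_mul_succ_add (Real.one_div_ne_intCast hw1) using 1
  field_simp
end

section
/- The sequence w ↦ ∑_{n=1}^∞ 1/((n − 1/w)(n + 1/w)), indexed by integers w ≥ 2, converges as w → ∞ to ∑_{n=1}^∞ 1/n², and consequently ∑_{n=1}^∞ 1/n² = π²/6. -/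
/-!
Since `1 / ((n - t) (n + t)) = 1 / (n² - t²)` and `n² - t² ≥ (3/4) n²` for `n ≥ 1` and `|t| ≤ 1/2`,
the terms are dominated by the summable sequence `(4/3) / n²` uniformly in small `t`, so Tannery's
theorem (dominated convergence for series) lets `t → 0` pass inside the sum. The value `π² / 6` is
Euler's evaluation `hasSum_zeta_two`, with the vanishing `n = 0` term dropped.
-/

open Real Filter Topology

theorem hasSum_one_div_nat_add_one_sq :
    HasSum (fun n : ℕ => 1 / ((n : ℝ) + 1) ^ 2) (π ^ 2 / 6) := by
  simpa using (hasSum_nat_add_iff' 1).mpr hasSum_zeta_two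

theorem three_quarters_mul_sq_le_sub_mul_add {a t : ℝ} (ha : 1 ≤ a) (ht : |t| ≤ 1 / 2) :
    3 / 4 * a ^ 2 ≤ (a - t) * (a + t) := by
  have ht_sq : t ^ 2 ≤ 1 / 4 := by nlinarith [sq_abs t, abs_nonneg t]
  nlinarith

theorem norm_one_div_sub_mul_add_le {a t : ℝ} (ha : 1 ≤ a) (ht : |t| ≤ 1 / 2) :
    ‖1 / ((a - t) * (a + t))‖ ≤ 4 / 3 / a ^ 2 := by
  have hlow := three_quarters_mul_sq_le_sub_mul_add ha ht
  have hpos : 0 < (a - t) * (a + t) := lt_of_lt_of_le (by positivity) hlow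
  rw [norm_of_nonneg (by positivity), div_le_div_iff₀ hpos (by positivity)]
  linarith

theorem tendsto_one_div_sub_mul_add {ι : Type*} {l : Filter ι} {t : ι → ℝ}
    (ht : Tendsto t l (𝓝 0)) {a : ℝ} (ha : a ≠ 0) :
    Tendsto (fun i => 1 / ((a - t i) * (a + t i))) l (𝓝 (1 / a ^ 2)) := by
  have hprod : Tendsto (fun i => (a - t i) * (a + t i)) l (𝓝 (a ^ 2)) := by
    simpa [sq] using (tendsto_const_nhds.sub ht).mul (tendsto_const_nhds.add ht)
  simpa only [one_div] using hprod.inv₀ (pow_ne_zero 2 ha)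

theorem tendsto_tsum_one_div_nat_add_one_sub_mul_add {ι : Type*} {l : Filter ι} {t : ι → ℝ}
    (ht : Tendsto t l (𝓝 0)) :
    Tendsto (fun i => ∑' n : ℕ, 1 / ((((n : ℝ) + 1) - t i) * (((n : ℝ) + 1) + t i)))
      l (𝓝 (∑' n : ℕ, 1 / ((n : ℝ) + 1) ^ 2)) := by
  refine tendsto_tsum_of_dominated_convergence (bound := fun n : ℕ => 4 / 3 / ((n : ℝ) + 1) ^ 2)
    ?_ (fun n => tendsto_one_div_sub_mul_add ht (by positivity)) ?_
  · simpa only [mul_one_div] using hasSum_one_div_nat_add_one_sq.summable.mul_left (4 / 3)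
  · have ht_small : ∀ᶠ i in l, |t i| ≤ 1 / 2 := by
      simpa only [Real.dist_eq, sub_zero] using
        ht.eventually (Metric.closedBall_mem_nhds 0 (by norm_num : (0 : ℝ) < 1 / 2))
    filter_upwards [ht_small] with i hi n
    exact norm_one_div_sub_mul_add_le (by simp) hi

theorem zeta2_via_limit_of_sums :
    Tendsto (fun w : ℕ => ∑' n : ℕ, 1 / ((((n : ℝ) + 1) - 1 / w) * (((n : ℝ) + 1) + 1 / w)))
      atTop (nhds (∑' n : ℕ, 1 / ((n : ℝ) + 1) ^ 2)) ∧
    (∑' n : ℕ, 1 / ((n : ℝ) + 1) ^ 2) = π ^ 2 / 6 :=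
  ⟨tendsto_tsum_one_div_nat_add_one_sub_mul_add tendsto_one_div_atTop_nhds_zero_nat,
    hasSum_one_div_nat_add_one_sq.tsum_eq⟩
end

section
/- For every integer w ≥ 3, the series ∑_{n=1}^∞ 1/((n − 2/w)(n − 1/w)(n + 1/w)(n + 2/w)) converges and equals (w³/24)·(π·(4·cot(π/w) − 2·cot(2π/w)) − 3w). -/
/-!
With `N = n + 1`, `a = 1/w`, `b = 2/w`, partial fractions split the summand as
`(1/(N² - b²) - 1/(N² - a²)) / (b² - a²)`, and each of the two series is read off from the
Mittag-Leffler expansion `π cot (π c) = 1/c + ∑ₙ 2c / (c² - (n + 1)²)` at a non-integer `c`.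
-/

open Real

theorem intCast_ne_of_pos_of_lt_one {R : Type*} [Ring R] [LinearOrder R] [IsStrictOrderedRing R]
    {c : R} (h0 : 0 < c) (h1 : c < 1) (n : ℤ) : (n : R) ≠ c := by
  rintro rfl
  norm_cast at h0 h1
  omega

theorem sq_intCast_ne_sq {R : Type*} [CommRing R] [NoZeroDivisors R] {c : R}
    (hc : ∀ n : ℤ, (n : R) ≠ c) (m : ℤ) : (m : R) ^ 2 ≠ c ^ 2 := by
  intro h
  rcases sq_eq_sq_iff_eq_or_eq_neg.mp h with h | h
  · exact hc m h
  · exact hc (-m) (by push_cast; rw [h, neg_neg])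

theorem one_div_sub_mul_sub_mul_add_mul_add {K : Type*} [Field K] {N a b : K}
    (ha : N ^ 2 ≠ a ^ 2) (hb : N ^ 2 ≠ b ^ 2) (hab : a ^ 2 ≠ b ^ 2) :
    1 / ((N - b) * (N - a) * (N + a) * (N + b)) =
      (1 / (N ^ 2 - b ^ 2) - 1 / (N ^ 2 - a ^ 2)) / (b ^ 2 - a ^ 2) := by
  rw [← sub_ne_zero] at ha hb
  have hba : b ^ 2 - a ^ 2 ≠ 0 := sub_ne_zero.mpr hab.symm
  rw [show (N - b) * (N - a) * (N + a) * (N + b) = (N ^ 2 - a ^ 2) * (N ^ 2 - b ^ 2) by ring]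
  field_simp
  ring

theorem Complex.hasSum_one_div_succ_sq_sub_sq {x : ℂ} (hx : x ∈ Complex.integerComplement) :
    HasSum (fun n : ℕ => 1 / (((n : ℂ) + 1) ^ 2 - x ^ 2))
      ((1 - π * x * Complex.cot (π * x)) / (2 * x ^ 2)) := by
  have hx0 := Complex.integerComplement.ne_zero hx
  have hcot : HasSum (cotTerm x) (π * Complex.cot (π * x) - 1 / x) :=
    (summable_cotTerm hx).hasSum_iff_tendsto_nat.mpr (tendsto_logDeriv_euler_cot_sub hx)
  rw [show (1 - π * x * Complex.cot (π * x)) / (2 * x ^ 2)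
      = -1 / (2 * x) * (π * Complex.cot (π * x) - 1 / x) by field_simp; ring]
  refine (hcot.mul_left _).congr_fun fun n => ?_
  have hn := Complex.integerComplement_pow_two_ne_pow_two hx (n + 1)
  push_cast at hn
  rw [cotTerm_identity hx n, show (x + (n + 1)) * (x - (n + 1)) = x ^ 2 - (n + 1) ^ 2 by ring]
  field_simp [sub_ne_zero.mpr hn, sub_ne_zero.mpr hn.symm]
  ring

theorem Real.hasSum_one_div_succ_sq_sub_sq {c : ℝ} (hc : ∀ n : ℤ, (n : ℝ) ≠ c) :
    HasSum (fun n : ℕ => 1 / (((n : ℝ) + 1) ^ 2 - c ^ 2))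
      ((1 - π * c * cot (π * c)) / (2 * c ^ 2)) := by
  have hcC : (c : ℂ) ∈ Complex.integerComplement := by
    rintro ⟨n, hn⟩
    exact hc n (mod_cast hn)
  rw [← Complex.hasSum_ofReal]
  push_cast [Complex.ofReal_cot]
  exact Complex.hasSum_one_div_succ_sq_sub_sq hcC

theorem Real.hasSum_one_div_prod_succ_sub_add {a b : ℝ} (ha : ∀ n : ℤ, (n : ℝ) ≠ a)
    (hb : ∀ n : ℤ, (n : ℝ) ≠ b) (hab : a ^ 2 ≠ b ^ 2) :
    HasSum (fun n : ℕ =>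
        1 / ((((n : ℝ) + 1) - b) * (((n : ℝ) + 1) - a) * (((n : ℝ) + 1) + a) * (((n : ℝ) + 1) + b)))
      (((1 - π * b * cot (π * b)) / (2 * b ^ 2) - (1 - π * a * cot (π * a)) / (2 * a ^ 2)) /
        (b ^ 2 - a ^ 2)) := by
  refine ((hasSum_one_div_succ_sq_sub_sq hb).sub (hasSum_one_div_succ_sq_sub_sq ha)).div_const _
    |>.congr_fun fun n => one_div_sub_mul_sub_mul_add_mul_add ?_ ?_ hab
  · exact_mod_cast sq_intCast_ne_sq ha (n + 1)
  · exact_mod_cast sq_intCast_ne_sq hb (n + 1)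

theorem zeta4_closed_form (w : ℤ) (hw : 3 ≤ w) :
    HasSum (fun n : ℕ =>
        1 / ((((n : ℝ) + 1) - 2 / w) * (((n : ℝ) + 1) - 1 / w) *
          (((n : ℝ) + 1) + 1 / w) * (((n : ℝ) + 1) + 2 / w)))
      (((w : ℝ) ^ 3 / 24) *
        (π * (4 * Real.cot (π / w) - 2 * Real.cot (2 * π / w)) - 3 * w)) := by
  have hw3 : (3 : ℝ) ≤ w := by exact_mod_cast hw
  have h1 := intCast_ne_of_pos_of_lt_one (c := 1 / (w : ℝ)) (by positivity)
    ((div_lt_one (by positivity)).mpr (by linarith))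
  have h2 := intCast_ne_of_pos_of_lt_one (c := 2 / (w : ℝ)) (by positivity)
    ((div_lt_one (by positivity)).mpr (by linarith))
  have h12 : (1 / (w : ℝ)) ^ 2 ≠ (2 / w) ^ 2 := by
    rw [div_pow, div_pow, Ne, div_left_inj' (by positivity)]
    norm_num
  convert Real.hasSum_one_div_prod_succ_sub_add h1 h2 h12 using 1
  rw [show π * (2 / (w : ℝ)) = 2 * π / w by ring, show π * (1 / (w : ℝ)) = π / w by ring]
  field_simp
  ring
end

section
/- The sequence w ↦ ∑_{n=1}^∞ 1/((n − 2/w)(n − 1/w)(n + 1/w)(n + 2/w)), indexed by integers w ≥ 3, converges as w → ∞ to ∑_{n=1}^∞ 1/n⁴, and consequently ∑_{n=1}^∞ 1/n⁴ = π⁴/90. -/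
open Real Filter

theorem zeta4_via_limit_of_sums :
    Tendsto (fun w : ℕ =>
        ∑' n : ℕ,
          1 / ((((n : ℝ) + 1) - 2 / w) * (((n : ℝ) + 1) - 1 / w) *
            (((n : ℝ) + 1) + 1 / w) * (((n : ℝ) + 1) + 2 / w)))
      atTop (nhds (∑' n : ℕ, 1 / ((n : ℝ) + 1) ^ 4)) ∧
    (∑' n : ℕ, 1 / ((n : ℝ) + 1) ^ 4) = π ^ 4 / 90 := by
  have hzeta : (∑' n : ℕ, 1 / ((n : ℝ) + 1) ^ 4) = π ^ 4 / 90 := by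
    have hshift : (∑' n : ℕ, 1 / ((n : ℝ) : ℝ) ^ 4) = ∑' n : ℕ, 1 / ((n : ℝ) + 1) ^ 4 := by
      rw [Summable.tsum_eq_zero_add hasSum_zeta_four.summable]
      push_cast
      norm_num
    rw [← hshift, hasSum_zeta_four.tsum_eq]
  refine ⟨?_, hzeta⟩
  have hsum0 : Summable (fun n : ℕ => 1 / ((n : ℝ) + 1) ^ 4) := by
    have := (Real.summable_one_div_nat_pow (p := 4)).mpr (by norm_num)
    exact (this.comp_injective (add_left_injective 1)).congr
      (fun n => by simp [Function.comp])
  have hsum : Summable (fun n : ℕ => 16 * (1 / ((n : ℝ) + 1) ^ 4)) := hsum0.mul_left 16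
  apply tendsto_tsum_of_dominated_convergence hsum
  · intro k
    have h1 : Tendsto (fun w : ℕ => 1 / (w : ℝ)) atTop (nhds 0) :=
      tendsto_one_div_atTop_nhds_zero_nat
    have h2 : Tendsto (fun w : ℕ => 2 / (w : ℝ)) atTop (nhds 0) :=
      tendsto_const_div_atTop_nhds_zero_nat 2
    have hd : Tendsto (fun w : ℕ =>
        (((k : ℝ) + 1) - 2 / w) * (((k : ℝ) + 1) - 1 / w) *
          (((k : ℝ) + 1) + 1 / w) * (((k : ℝ) + 1) + 2 / w)) atTop
        (nhds (((k : ℝ) + 1) ^ 4)) := by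
      have h : Tendsto (fun w : ℕ =>
          (((k : ℝ) + 1) - 2 / w) * (((k : ℝ) + 1) - 1 / w) *
            (((k : ℝ) + 1) + 1 / w) * (((k : ℝ) + 1) + 2 / w)) atTop
          (nhds ((((k : ℝ) + 1) - 0) * (((k : ℝ) + 1) - 0) *
            (((k : ℝ) + 1) + 0) * (((k : ℝ) + 1) + 0))) :=
        (((tendsto_const_nhds.sub h2).mul (tendsto_const_nhds.sub h1)).mul
          (tendsto_const_nhds.add h1)).mul (tendsto_const_nhds.add h2)
      have heq : (((k : ℝ) + 1) - 0) * (((k : ℝ) + 1) - 0) *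
          (((k : ℝ) + 1) + 0) * (((k : ℝ) + 1) + 0) = ((k : ℝ) + 1) ^ 4 := by ring
      rw [heq] at h
      exact h
    exact tendsto_const_nhds.div hd (by positivity)
  · filter_upwards [eventually_ge_atTop 4] with w hw k
    have hw4 : (4 : ℝ) ≤ (w : ℝ) := by exact_mod_cast hw
    have hwpos : (0 : ℝ) < w := by linarith
    have h2w : 2 / (w : ℝ) ≤ 1 / 2 := by
      rw [div_le_div_iff₀ hwpos (by norm_num)]; linarith
    have h1w : 1 / (w : ℝ) ≤ 1 / 2 := by
      rw [div_le_div_iff₀ hwpos (by norm_num)]; linarith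
    have h1wpos : (0 : ℝ) < 1 / w := by positivity
    have h2wpos : (0 : ℝ) < 2 / w := by positivity
    set a : ℝ := (k : ℝ) + 1 with ha
    have ha1 : (1 : ℝ) ≤ a := by
      have : (0 : ℝ) ≤ (k : ℝ) := Nat.cast_nonneg k
      linarith
    have f1 : a / 2 ≤ a - 2 / w := by linarith
    have f2 : a / 2 ≤ a - 1 / w := by linarith
    have f3 : a / 2 ≤ a + 1 / w := by linarith
    have f4 : a / 2 ≤ a + 2 / w := by linarith
    have hap : (0 : ℝ) < a / 2 := by linarith
    have p1 : (0 : ℝ) < a - 2 / w := lt_of_lt_of_le hap f1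
    have p2 : (0 : ℝ) < a - 1 / w := lt_of_lt_of_le hap f2
    have p3 : (0 : ℝ) < a + 1 / w := lt_of_lt_of_le hap f3
    have p4 : (0 : ℝ) < a + 2 / w := lt_of_lt_of_le hap f4
    have hprod : (a / 2) * (a / 2) * (a / 2) * (a / 2) ≤
        (a - 2 / w) * (a - 1 / w) * (a + 1 / w) * (a + 2 / w) :=
      mul_le_mul (mul_le_mul (mul_le_mul f1 f2 hap.le p1.le) f3 hap.le
        (mul_pos p1 p2).le) f4 hap.le (mul_pos (mul_pos p1 p2) p3).le
    have hppos : (0 : ℝ) < (a - 2 / w) * (a - 1 / w) * (a + 1 / w) * (a + 2 / w) :=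
      mul_pos (mul_pos (mul_pos p1 p2) p3) p4
    have ha4 : (0 : ℝ) < a ^ 4 := pow_pos (by linarith) 4
    rw [Real.norm_eq_abs, abs_of_pos (one_div_pos.mpr hppos), mul_one_div,
      div_le_div_iff₀ hppos ha4]
    nlinarith [hprod]
end
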